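/- Let f_1, …, f_N : ℝ^d → ℝ be convex differentiable functions whose gradients are each L-Lipschitz continuous, let f = (1/N)·Σ_{i=1}^N f_i, and let w* be a global minimizer of f (so ∇f(w*) = 0). Then for every w, w̃ ∈ ℝ^d, (1/N)·Σ_{i=1}^N ‖∇f_i(w) − ∇f_i(w̃) + ∇f(w̃)‖² ≤ 4L·(f(w) − f(w*)) + 4L·(f(w̃) − f(w*)). -/

import Mathlib

/-!
Write the estimator as `aᵢ - (bᵢ - ∇f(w̃))` with `aᵢ = ∇fᵢ(w) - ∇fᵢ(w*)` and
`bᵢ = ∇fᵢ(w̃) - ∇fᵢ(w*)`. Since `∇f(w*) = 0`, `∇f(w̃)` is the mean of the `bᵢ`, and subtracting the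
mean does not increase the second moment; so `‖a - (b - m)‖² ≤ 2‖a‖² + 2‖b‖²` reduces the claim to
the co-coercivity bound `‖∇g(x) - ∇g(y)‖² ≤ 2L·D_g(x, y)` of a convex `L`-smooth `g`, where `D_g` is
the Bregman divergence. Averaged over `i`, the Bregman divergences of the `fᵢ` at `w*` add up to
`f(u) - f(w*)`.
-/

open Set Finset
open scoped Gradient RealInnerProductSpace

section Smooth

variable {E : Type*} [NormedAddCommGroup E] [InnerProductSpace ℝ E] [CompleteSpace E]

noncomputable def bregman (g : E → ℝ) (x y : E) : ℝ := g x - g y - ⟪∇ g y, x - y⟫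

lemma Differentiable.hasDerivAt_comp_add_smul {g : E → ℝ} (hg : Differentiable ℝ g)
    (x v : E) (t : ℝ) :
    HasDerivAt (fun s : ℝ => g (x + s • v)) ⟪∇ g (x + t • v), v⟫ t := by
  have hline : HasDerivAt (fun s : ℝ => x + s • v) v t := by
    simpa using ((hasDerivAt_id t).smul_const v).const_add x
  exact (hg _).hasGradientAt.hasFDerivAt.comp_hasDerivAt t hline

lemma ConvexOn.bregman_nonneg {g : E → ℝ} (hc : ConvexOn ℝ univ g) (hg : Differentiable ℝ g)
    (x y : E) : 0 ≤ bregman g x y := by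
  have hline : ConvexOn ℝ univ (fun t : ℝ => g (y + t • (x - y))) := by
    simpa [Function.comp_def, AffineMap.lineMap_apply_module', add_comm]
      using hc.comp_affineMap (AffineMap.lineMap y x)
  have hslope := hline.le_slope_of_hasDerivAt (mem_univ 0) (mem_univ 1) zero_lt_one
    (hg.hasDerivAt_comp_add_smul y (x - y) 0)
  simp only [slope_def_field, zero_smul, add_zero, one_smul, sub_zero, div_one,
    add_sub_cancel] at hslope
  unfold bregman
  linarith

lemma bregman_le_of_lipschitz_gradient {g : E → ℝ} (hg : Differentiable ℝ g) {L : ℝ}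
    (hlip : ∀ x y, ‖∇ g x - ∇ g y‖ ≤ L * ‖x - y‖) (x y : E) :
    bregman g y x ≤ L / 2 * ‖y - x‖ ^ 2 := by
  set v := y - x
  set ψ : ℝ → ℝ := fun t => g (x + t • v) - t * ⟪∇ g x, v⟫ - L / 2 * ‖v‖ ^ 2 * t ^ 2
  have hψ : ∀ t, HasDerivAt ψ (⟪∇ g (x + t • v) - ∇ g x, v⟫ - L * ‖v‖ ^ 2 * t) t := by
    intro t
    refine (((hg.hasDerivAt_comp_add_smul x v t).sub
      ((hasDerivAt_id t).mul_const ⟪∇ g x, v⟫)).sub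
      ((hasDerivAt_pow 2 t).const_mul (L / 2 * ‖v‖ ^ 2))).congr_deriv ?_
    rw [inner_sub_left]
    push_cast
    ring
  have hψ_anti : AntitoneOn ψ (Ici 0) := by
    refine antitoneOn_of_hasDerivWithinAt_nonpos (convex_Ici 0)
      (fun t _ => (hψ t).continuousAt.continuousWithinAt)
      (fun t _ => (hψ t).hasDerivWithinAt) fun t ht => sub_nonpos.2 ?_
    rw [interior_Ici, Set.mem_Ioi] at ht
    calc ⟪∇ g (x + t • v) - ∇ g x, v⟫ ≤ ‖∇ g (x + t • v) - ∇ g x‖ * ‖v‖ := real_inner_le_norm _ _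
      _ ≤ L * ‖t • v‖ * ‖v‖ := by
          gcongr
          simpa using hlip (x + t • v) x
      _ = L * ‖v‖ ^ 2 * t := by rw [norm_smul, Real.norm_of_nonneg ht.le]; ring
  have := hψ_anti (mem_Ici.2 le_rfl) (mem_Ici.2 zero_le_one) zero_le_one
  simp only [ψ, v, zero_smul, one_smul, add_zero, add_sub_cancel, zero_mul, one_mul, sub_zero,
    one_pow, mul_one, ne_eq, OfNat.ofNat_ne_zero, not_false_eq_true, zero_pow, mul_zero] at this
  unfold bregman
  linarith

lemma ConvexOn.norm_gradient_sub_sq_le_bregman {g : E → ℝ} (hc : ConvexOn ℝ univ g)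
    (hg : Differentiable ℝ g) {L : ℝ} (hlip : ∀ x y, ‖∇ g x - ∇ g y‖ ≤ L * ‖x - y‖) (x y : E) :
    ‖∇ g x - ∇ g y‖ ^ 2 ≤ 2 * L * bregman g x y := by
  obtain rfl | hxy := eq_or_ne x y
  · simp [bregman]
  have hL : 0 ≤ L := nonneg_of_mul_nonneg_left ((norm_nonneg _).trans (hlip x y))
    (norm_pos_iff.2 (sub_ne_zero.2 hxy))
  obtain rfl | hL := hL.eq_or_lt
  · have : ∇ g x = ∇ g y := by simpa [sub_eq_zero] using hlip x y
    simp [this]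
  -- `g z` at the gradient step `z` from `x` is bounded below by convexity at `y` and above by
  -- the descent lemma at `x`.
  set v := ∇ g x - ∇ g y
  set z := x - L⁻¹ • v
  have hconv := hc.bregman_nonneg hg z y
  have hdesc := bregman_le_of_lipschitz_gradient hg hlip x z
  have hzy : z - y = (x - y) - L⁻¹ • v := by simp only [z]; abel
  have hzx : z - x = -(L⁻¹ • v) := by simp only [z]; abel
  have hv : L⁻¹ * ⟪∇ g x, v⟫ - L⁻¹ * ⟪∇ g y, v⟫ = L⁻¹ * ‖v‖ ^ 2 := by
    rw [← mul_sub, ← inner_sub_left, real_inner_self_eq_norm_sq]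
  have hsq : L / 2 * ‖L⁻¹ • v‖ ^ 2 = L⁻¹ * ‖v‖ ^ 2 / 2 := by
    rw [norm_smul, Real.norm_of_nonneg (inv_nonneg.2 hL.le)]
    field_simp
  unfold bregman at *
  rw [hzy, inner_sub_right, inner_smul_right] at hconv
  rw [hzx, inner_neg_right, inner_smul_right, norm_neg, hsq] at hdesc
  calc ‖v‖ ^ 2 = 2 * L * (L⁻¹ * ‖v‖ ^ 2 / 2) := by field_simp
    _ ≤ 2 * L * (g x - g y - ⟪∇ g y, x - y⟫) := by gcongr; linarith

lemma IsLocalMin.gradient_eq_zero {g : E → ℝ} {a : E} (h : IsLocalMin g a) : ∇ g a = 0 := by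
  simp [gradient, h.fderiv_eq_zero]

end Smooth

lemma norm_sub_sq_le_two_mul_add {G : Type*} [SeminormedAddCommGroup G] (a b : G) :
    ‖a - b‖ ^ 2 ≤ 2 * ‖a‖ ^ 2 + 2 * ‖b‖ ^ 2 := by
  nlinarith [norm_sub_le a b, norm_nonneg (a - b), add_sq_le (a := ‖a‖) (b := ‖b‖)]

section Average

variable {ι E : Type*} [Fintype ι]

lemma sum_apply_eq_card_mul {fi : ι → E → ℝ} {f : E → ℝ}
    (hf : ∀ x, f x = (Fintype.card ι : ℝ)⁻¹ * ∑ i, fi i x) (x : E) :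
    ∑ i, fi i x = Fintype.card ι * f x := by
  cases isEmpty_or_nonempty ι
  · simp
  · rw [hf, mul_inv_cancel_left₀ (by positivity)]

variable [NormedAddCommGroup E] [InnerProductSpace ℝ E]

lemma sum_norm_sub_sq_le_sum_norm_sq (b : ι → E) {m : E}
    (hm : ∑ i, b i = (Fintype.card ι : ℝ) • m) : ∑ i, ‖b i - m‖ ^ 2 ≤ ∑ i, ‖b i‖ ^ 2 := by
  have : ∑ i, ‖b i - m‖ ^ 2 = ∑ i, ‖b i‖ ^ 2 - Fintype.card ι * ‖m‖ ^ 2 := by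
    simp only [norm_sub_sq_real, sum_add_distrib, sum_sub_distrib, ← mul_sum, ← sum_inner, hm,
      real_inner_smul_left, real_inner_self_eq_norm_sq, sum_const, card_univ, nsmul_eq_mul]
    ring
  rw [this]
  linarith [mul_nonneg (Nat.cast_nonneg (α := ℝ) (Fintype.card ι)) (sq_nonneg ‖m‖)]

lemma sum_norm_sub_sub_sq_le (a b : ι → E) {m : E} (hm : ∑ i, b i = (Fintype.card ι : ℝ) • m) :
    ∑ i, ‖a i - (b i - m)‖ ^ 2 ≤ 2 * ∑ i, ‖a i‖ ^ 2 + 2 * ∑ i, ‖b i‖ ^ 2 := by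
  calc ∑ i, ‖a i - (b i - m)‖ ^ 2 ≤ ∑ i, (2 * ‖a i‖ ^ 2 + 2 * ‖b i - m‖ ^ 2) :=
        sum_le_sum fun i _ => norm_sub_sq_le_two_mul_add _ _
    _ = 2 * ∑ i, ‖a i‖ ^ 2 + 2 * ∑ i, ‖b i - m‖ ^ 2 := by
        rw [sum_add_distrib, mul_sum, mul_sum]
    _ ≤ 2 * ∑ i, ‖a i‖ ^ 2 + 2 * ∑ i, ‖b i‖ ^ 2 := by
        linarith [sum_norm_sub_sq_le_sum_norm_sq b hm]

variable [CompleteSpace E] {fi : ι → E → ℝ} {f : E → ℝ}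

lemma hasGradientAt_of_eq_average (hdiff : ∀ i, Differentiable ℝ (fi i))
    (hf : ∀ x, f x = (Fintype.card ι : ℝ)⁻¹ * ∑ i, fi i x) (x : E) :
    HasGradientAt f ((Fintype.card ι : ℝ)⁻¹ • ∑ i, ∇ (fi i) x) x := by
  rw [funext hf, hasGradientAt_iff_hasFDerivAt, map_smul, map_sum]
  exact (HasFDerivAt.fun_sum fun i _ => (hdiff i x).hasGradientAt.hasFDerivAt).const_mul _

lemma sum_gradient_eq_card_smul (hdiff : ∀ i, Differentiable ℝ (fi i))
    (hf : ∀ x, f x = (Fintype.card ι : ℝ)⁻¹ * ∑ i, fi i x) (x : E) :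
    ∑ i, ∇ (fi i) x = (Fintype.card ι : ℝ) • ∇ f x := by
  rw [(hasGradientAt_of_eq_average hdiff hf x).gradient]
  cases isEmpty_or_nonempty ι
  · simp
  · rw [smul_inv_smul₀ (by positivity)]

lemma sum_bregman_eq_card_mul (hdiff : ∀ i, Differentiable ℝ (fi i))
    (hf : ∀ x, f x = (Fintype.card ι : ℝ)⁻¹ * ∑ i, fi i x) (x y : E) :
    ∑ i, bregman (fi i) x y = Fintype.card ι * bregman f x y := by
  simp only [bregman, sum_sub_distrib, ← sum_inner, sum_apply_eq_card_mul hf,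
    sum_gradient_eq_card_smul hdiff hf, real_inner_smul_left]
  ring

lemma sum_norm_gradient_sub_sq_le_bregman (hconv : ∀ i, ConvexOn ℝ univ (fi i))
    (hdiff : ∀ i, Differentiable ℝ (fi i)) {L : ℝ}
    (hlip : ∀ i x y, ‖∇ (fi i) x - ∇ (fi i) y‖ ≤ L * ‖x - y‖)
    (hf : ∀ x, f x = (Fintype.card ι : ℝ)⁻¹ * ∑ i, fi i x) (x y : E) :
    ∑ i, ‖∇ (fi i) x - ∇ (fi i) y‖ ^ 2 ≤ 2 * L * (Fintype.card ι * bregman f x y) := by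
  rw [← sum_bregman_eq_card_mul hdiff hf, mul_sum]
  exact sum_le_sum fun i _ => (hconv i).norm_gradient_sub_sq_le_bregman (hdiff i) (hlip i) x y

end Average

/-- **Second-moment bound for the SVRG variance-reduced gradient estimator.**
If each `f_i : ℝ^d → ℝ` is convex and differentiable with `L`-Lipschitz gradient,
`f = (1/N)·Σᵢ fᵢ`, and `w*` is a global minimizer of `f`, then for every `w, w̃`,
`(1/N)·Σᵢ ‖∇fᵢ(w) − ∇fᵢ(w̃) + ∇f(w̃)‖² ≤ 4L(f(w) − f(w*)) + 4L(f(w̃) − f(w*))`. -/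
theorem svrg_estimator_second_moment {d N : ℕ} (L : ℝ)
    (fi : Fin N → EuclideanSpace ℝ (Fin d) → ℝ)
    (f : EuclideanSpace ℝ (Fin d) → ℝ)
    (hconv : ∀ i, ConvexOn ℝ Set.univ (fi i))
    (hdiff : ∀ i, Differentiable ℝ (fi i))
    (hlip : ∀ i x y, ‖gradient (fi i) x - gradient (fi i) y‖ ≤ L * ‖x - y‖)
    (hf : ∀ x, f x = (N : ℝ)⁻¹ * ∑ i, fi i x)
    (wstar : EuclideanSpace ℝ (Fin d))
    (hmin : ∀ x, f wstar ≤ f x) :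
    ∀ w wt, (N : ℝ)⁻¹ * ∑ i, ‖gradient (fi i) w - gradient (fi i) wt + gradient f wt‖ ^ 2
      ≤ 4 * L * (f w - f wstar) + 4 * L * (f wt - f wstar) := by
  intro w wt
  obtain rfl | hN := Nat.eq_zero_or_pos N
  · simp [hf]
  have hf' : ∀ x, f x = (Fintype.card (Fin N) : ℝ)⁻¹ * ∑ i, fi i x := by simpa using hf
  have hgrad : ∇ f wstar = 0 := IsLocalMin.gradient_eq_zero (.of_forall hmin)
  have hmean : ∑ i, (∇ (fi i) wt - ∇ (fi i) wstar) = (Fintype.card (Fin N) : ℝ) • ∇ f wt := by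
    rw [sum_sub_distrib, sum_gradient_eq_card_smul hdiff hf', sum_gradient_eq_card_smul hdiff hf',
      hgrad, smul_zero, sub_zero]
  have hcoco : ∀ u, ∑ i, ‖∇ (fi i) u - ∇ (fi i) wstar‖ ^ 2 ≤ 2 * L * (N * (f u - f wstar)) := by
    intro u
    simpa [bregman, hgrad] using sum_norm_gradient_sub_sq_le_bregman hconv hdiff hlip hf' u wstar
  calc (N : ℝ)⁻¹ * ∑ i, ‖∇ (fi i) w - ∇ (fi i) wt + ∇ f wt‖ ^ 2
      = (N : ℝ)⁻¹ * ∑ i, ‖(∇ (fi i) w - ∇ (fi i) wstar)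
          - ((∇ (fi i) wt - ∇ (fi i) wstar) - ∇ f wt)‖ ^ 2 := by
        congr! 4 with i; abel
    _ ≤ (N : ℝ)⁻¹ * (2 * (2 * L * (N * (f w - f wstar)))
          + 2 * (2 * L * (N * (f wt - f wstar)))) := by
        gcongr
        refine (sum_norm_sub_sub_sq_le _ _ hmean).trans ?_
        gcongr <;> apply hcoco
    _ = 4 * L * (f w - f wstar) + 4 * L * (f wt - f wstar) := by
        field_simp
        ring
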